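/- For a Hermitian positive definite matrix E, the function Z ↦ log det(Z) − tr(Z E) + M over Hermitian positive definite M×M matrices Z attains its unique maximum at Z = E⁻¹, with maximum value log det(E⁻¹) = −log det(E). -/

import Mathlib

/-!
Since `E = Bᴴ B` with `B` invertible, `Z E` is similar to the positive definite matrix `B Z Bᴴ`.
With eigenvalues `λᵢ > 0` of the latter, `tr(Z E) − M − log det(Z E) = ∑ (λᵢ − 1 − log λᵢ) ≥ 0`
because `log x ≤ x − 1`, with equality iff every `λᵢ = 1`, i.e. iff `Z E = 1`.
-/

open Matrix ComplexOrder

namespace Matrix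

lemma conj_eq_one_iff {n α : Type*} [Fintype n] [DecidableEq n] [CommRing α]
    {B : Matrix n n α} (hB : IsUnit B) {N : Matrix n n α} : B * N * B⁻¹ = 1 ↔ N = 1 := by
  have hB' := (isUnit_iff_isUnit_det B).1 hB
  refine ⟨fun h => ?_, fun h => by rw [h, mul_one, mul_nonsing_inv B hB']⟩
  calc N = B⁻¹ * (B * N * B⁻¹) * B := by
        rw [← mul_assoc, ← mul_assoc, nonsing_inv_mul B hB', one_mul, mul_assoc,
          nonsing_inv_mul B hB', mul_one]
    _ = 1 := by rw [h, mul_one, nonsing_inv_mul B hB']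

variable {𝕜 n : Type*} [RCLike 𝕜] [Fintype n] [DecidableEq n]

namespace IsHermitian

variable {A : Matrix n n 𝕜}

lemma re_det_eq_prod_eigenvalues (hA : A.IsHermitian) :
    RCLike.re A.det = ∏ i, hA.eigenvalues i := by
  rw [hA.det_eq_prod_eigenvalues, ← RCLike.ofReal_prod, RCLike.ofReal_re]

lemma re_trace_eq_sum_eigenvalues (hA : A.IsHermitian) :
    RCLike.re A.trace = ∑ i, hA.eigenvalues i := by
  rw [hA.trace_eq_sum_eigenvalues, ← RCLike.ofReal_sum, RCLike.ofReal_re]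

lemma eq_one_of_eigenvalues_eq_one (hA : A.IsHermitian) (h : ∀ i, hA.eigenvalues i = 1) :
    A = 1 := by
  rw [hA.spectral_theorem]
  simp [Function.comp_def, h]

end IsHermitian

namespace PosDef

variable {A Z E : Matrix n n 𝕜}

lemma re_trace_sub_card_sub_log_re_det (hA : A.PosDef) :
    RCLike.re A.trace - Fintype.card n - Real.log (RCLike.re A.det) =
      ∑ i, (hA.1.eigenvalues i - 1 - Real.log (hA.1.eigenvalues i)) := by
  rw [hA.1.re_trace_eq_sum_eigenvalues, hA.1.re_det_eq_prod_eigenvalues,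
    Real.log_prod fun i _ => (hA.eigenvalues_pos i).ne', Finset.sum_sub_distrib,
    Finset.sum_sub_distrib]
  simp

lemma log_re_det_le_re_trace_sub_card (hA : A.PosDef) :
    Real.log (RCLike.re A.det) ≤ RCLike.re A.trace - Fintype.card n := by
  have hsum := Finset.sum_nonneg fun i (_ : i ∈ Finset.univ) =>
    sub_nonneg.2 (Real.log_le_sub_one_of_pos (hA.eigenvalues_pos i))
  linarith [hA.re_trace_sub_card_sub_log_re_det]

lemma log_re_det_eq_re_trace_sub_card_iff (hA : A.PosDef) :
    Real.log (RCLike.re A.det) = RCLike.re A.trace - Fintype.card n ↔ A = 1 := by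
  refine ⟨fun h => hA.1.eq_one_of_eigenvalues_eq_one fun i => ?_, fun h => by subst h; simp⟩
  have hsum : ∑ i, (hA.1.eigenvalues i - 1 - Real.log (hA.1.eigenvalues i)) = 0 := by
    linarith [hA.re_trace_sub_card_sub_log_re_det]
  have hterm := (Finset.sum_eq_zero_iff_of_nonneg fun j _ =>
    sub_nonneg.2 (Real.log_le_sub_one_of_pos (hA.eigenvalues_pos j))).1 hsum i
    (Finset.mem_univ i)
  by_contra hne
  linarith [Real.log_lt_sub_one_of_pos (hA.eigenvalues_pos i) hne]

lemma log_re_det_mul (hZ : Z.PosDef) (hE : E.PosDef) :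
    Real.log (RCLike.re (Z * E).det) = Real.log (RCLike.re Z.det) + Real.log (RCLike.re E.det) := by
  obtain ⟨z, hz, hz'⟩ := RCLike.pos_iff_exists_ofReal.1 hZ.det_pos
  obtain ⟨e, he, he'⟩ := RCLike.pos_iff_exists_ofReal.1 hE.det_pos
  rw [det_mul, ← hz', ← he', ← RCLike.ofReal_mul, RCLike.ofReal_re, RCLike.ofReal_re,
    RCLike.ofReal_re, Real.log_mul hz.ne' he.ne']

lemma log_re_det_inv (hE : E.PosDef) :
    Real.log (RCLike.re E⁻¹.det) = -Real.log (RCLike.re E.det) := by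
  have h := hE.inv.log_re_det_mul hE
  rw [nonsing_inv_mul E hE.det_pos.ne'.isUnit, det_one, RCLike.one_re, Real.log_one] at h
  linarith

open scoped MatrixOrder in
lemma exists_isUnit_eq_conjTranspose_mul_self (hE : E.PosDef) :
    ∃ B : Matrix n n 𝕜, IsUnit B ∧ E = Bᴴ * B := by
  refine ⟨CFC.sqrt E, hE.isStrictlyPositive.isUnit_cfcSqrt, ?_⟩
  rw [(CFC.sqrt_nonneg E).posSemidef.1.eq, CFC.sqrt_mul_sqrt_self E hE.posSemidef.nonneg]

lemma exists_posDef_conj_mul (hZ : Z.PosDef) (hE : E.PosDef) :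
    ∃ B : Matrix n n 𝕜, IsUnit B ∧ (B * (Z * E) * B⁻¹).PosDef := by
  obtain ⟨B, hB, rfl⟩ := hE.exists_isUnit_eq_conjTranspose_mul_self
  refine ⟨B, hB, ?_⟩
  have hconj : B * (Z * (Bᴴ * B)) * B⁻¹ = B * Z * Bᴴ := by
    rw [mul_assoc, mul_assoc, mul_assoc, mul_nonsing_inv B ((isUnit_iff_isUnit_det B).1 hB),
      mul_one, ← mul_assoc]
  rw [hconj]
  exact hZ.mul_mul_conjTranspose_same (vecMul_injective_of_isUnit hB)

lemma log_re_det_sub_re_trace_mul_add_card_le (hZ : Z.PosDef) (hE : E.PosDef) :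
    Real.log (RCLike.re Z.det) - RCLike.re (Z * E).trace + Fintype.card n ≤
      -Real.log (RCLike.re E.det) := by
  obtain ⟨B, hB, hA⟩ := hZ.exists_posDef_conj_mul hE
  have h := hA.log_re_det_le_re_trace_sub_card
  rw [det_conj hB, trace_conj hB, hZ.log_re_det_mul hE] at h
  linarith

lemma log_re_det_sub_re_trace_mul_add_card_eq_iff (hZ : Z.PosDef) (hE : E.PosDef) :
    Real.log (RCLike.re Z.det) - RCLike.re (Z * E).trace + Fintype.card n =
      -Real.log (RCLike.re E.det) ↔ Z = E⁻¹ := by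
  obtain ⟨B, hB, hA⟩ := hZ.exists_posDef_conj_mul hE
  have hZE : Z * E = 1 ↔ Z = E⁻¹ :=
    ⟨fun h => (inv_eq_left_inv h).symm, fun h => h ▸ nonsing_inv_mul E hE.det_pos.ne'.isUnit⟩
  have h := hA.log_re_det_eq_re_trace_sub_card_iff
  rw [det_conj hB, trace_conj hB, hZ.log_re_det_mul hE, conj_eq_one_iff hB, hZE] at h
  rw [← h]
  constructor <;> intro <;> linarith

end PosDef

end Matrix

/-- For Hermitian positive definite `E`, the function
`Z ↦ log det Z − tr(Z E) + M` over Hermitian positive definite `Z` attains its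
unique maximum at `Z = E⁻¹`, with maximum value `log det(E⁻¹) = −log det E`. -/
theorem logdet_trace_max_at_inv (M : ℕ) (E : Matrix (Fin M) (Fin M) ℂ)
    (hE : E.PosDef) :
    (∀ Z : Matrix (Fin M) (Fin M) ℂ, Z.PosDef →
        Real.log Z.det.re - (Z * E).trace.re + M
          ≤ Real.log (E⁻¹).det.re - (E⁻¹ * E).trace.re + M) ∧
    (∀ Z : Matrix (Fin M) (Fin M) ℂ, Z.PosDef →
        (Real.log Z.det.re - (Z * E).trace.re + M
            = Real.log (E⁻¹).det.re - (E⁻¹ * E).trace.re + M ↔ Z = E⁻¹)) ∧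
    Real.log (E⁻¹).det.re = -Real.log E.det.re := by
  have hmax : Real.log (E⁻¹).det.re - (E⁻¹ * E).trace.re + M = -Real.log E.det.re := by
    rw [nonsing_inv_mul E hE.det_pos.ne'.isUnit, trace_one]
    simpa using hE.log_re_det_inv
  rw [hmax]
  refine ⟨fun Z hZ => ?_, fun Z hZ => ?_, by simpa using hE.log_re_det_inv⟩
  · simpa using hZ.log_re_det_sub_re_trace_mul_add_card_le hE
  · simpa using hZ.log_re_det_sub_re_trace_mul_add_card_eq_iff hE
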